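/- (Population version of Corollary 1: identification of the average offset treatment effect on the treated, AOTT.) Under consistency of the potential outcomes and Assumptions (A4), (A5) and (A6), if Δμ_C is a version of E[ΔY ∣ G=C, X], then E[ (1{G=T}/p_T) · (ΔY − Δμ_C(X)) ] + E[ (e_T(X)/p_T) · ( 1{G=N}/e_N(X) − 1{G=C}/e_C(X) ) · ΔY ] = τ := E[(Y₁^{(1,1)} − Y₁^{(0,0)})·1{G=T}]/p_T. In particular τ = ATT + δ, where ATT := E[(Y₁^{(1,0)} − Y₁^{(0,0)})·1{G=T}]/p_T and δ := E[(Y₁^{(1,1)} − Y₁^{(1,0)})·1{G=T}]/p_T. -/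

import Mathlib

/-!
Conditioning on `X` turns an inverse-propensity weighted group average `E[(e_T/e_g)(X) Z 1{G=g}]`
into `E[f(X) e_T(X)]` for a version `f` of `E[Z ∣ G=g, X]`, which is the treated-group average
`E[Z' 1{G=T}]` of any `Z'` sharing that version. By consistency and (A4), `Δμ_C` is a version of
`E[Y₁^{(0,0)} - Y₀^{(0,0)} ∣ G=T, X]`, so the first term is the difference-in-differences form of
the ATT. In the second term, `E[ΔY ∣ G=N, X] - E[ΔY ∣ G=C, X] = E[Y₁^{(0,1)} - Y₁^{(0,0)} ∣ G=N, X]`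
by (A6), and (A5) identifies it with `E[Y₁^{(1,1)} - Y₁^{(1,0)} ∣ G=T, X]`, so it equals `δ`.
-/

open MeasureTheory ProbabilityTheory Filter Topology

/-- Group label: `T` = treated (`g(A)=(1,0)`), `N` = neighboring control (`g(A)=(0,1)`),
`C` = non-neighboring control (`g(A)=(0,0)`). -/
inductive GLabel : Type
  | T | N | C
  deriving DecidableEq

instance : MeasurableSpace GLabel := ⊤

/-- The σ-algebra `𝔛` generated by the covariates `X`. -/
def sigmaX {Ω : Type} {q : ℕ} (X : Ω → (Fin q → ℝ)) : MeasurableSpace Ω :=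
  MeasurableSpace.comap X inferInstance

/-- The indicator `1{G = g}` as a real-valued function. -/
def indG {Ω : Type} (G : Ω → GLabel) (g : GLabel) (ω : Ω) : ℝ :=
  if G ω = g then 1 else 0

/-- `f` is a version of the conditional expectation `E[Z ∣ G = g, X]`:
it is measurable and `E[Z·1{G=g} ∣ 𝔛] = f(X)·e_g(X)` `P`-a.s. -/
def IsCondVersion {Ω : Type} [MeasurableSpace Ω] (P : Measure Ω) {q : ℕ}
    (X : Ω → (Fin q → ℝ)) (G : Ω → GLabel) (e : GLabel → (Fin q → ℝ) → ℝ)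
    (g : GLabel) (Z : Ω → ℝ) (f : (Fin q → ℝ) → ℝ) : Prop :=
  Measurable f ∧
    P[(fun ω => Z ω * indG G g ω) | sigmaX X] =ᵐ[P] (fun ω => f (X ω) * e g (X ω))

theorem abs_div_le_inv_of_le {a b ε : ℝ} (hε : 0 < ε) (ha : 0 ≤ a) (ha1 : a ≤ 1) (hb : ε ≤ b) :
    |a / b| ≤ ε⁻¹ := by
  have hb0 : 0 < b := hε.trans_le hb
  rw [abs_of_nonneg (div_nonneg ha hb0.le), ← one_div]
  calc a / b ≤ 1 / b := div_le_div_of_nonneg_right ha1 hb0.le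
    _ ≤ 1 / ε := one_div_le_one_div_of_le hε hb

theorem integral_mul_eq_of_condExp_ae_eq {Ω : Type*} {m m₀ : MeasurableSpace Ω} {μ : Measure Ω}
    (hm : m ≤ m₀) [SigmaFinite (μ.trim hm)] {φ W V : Ω → ℝ} (hφ : StronglyMeasurable[m] φ)
    (hφW : Integrable (fun ω => φ ω * W ω) μ) (hW : Integrable W μ) (hV : μ[W | m] =ᵐ[μ] V) :
    ∫ ω, φ ω * W ω ∂μ = ∫ ω, φ ω * V ω ∂μ := by
  calc ∫ ω, φ ω * W ω ∂μ = ∫ ω, (μ[φ * W | m]) ω ∂μ := (integral_condExp hm).symm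
    _ = ∫ ω, φ ω * V ω ∂μ := by
      refine integral_congr_ae ((condExp_mul_of_stronglyMeasurable_left hφ hφW hW).trans ?_)
      filter_upwards [hV] with ω hω
      simp only [Pi.mul_apply, hω]

section

variable {Ω : Type} {q : ℕ} {X : Ω → (Fin q → ℝ)} {G : Ω → GLabel}
  {e : GLabel → (Fin q → ℝ) → ℝ} {g g' : GLabel} {Z Z' : Ω → ℝ} {f f' : (Fin q → ℝ) → ℝ}

theorem stronglyMeasurable_sigmaX_comp {φ : (Fin q → ℝ) → ℝ} (hφ : Measurable φ) :
    StronglyMeasurable[sigmaX X] (fun ω => φ (X ω)) :=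
  (hφ.comp (comap_measurable X)).stronglyMeasurable

theorem mul_indG_eq_indicator :
    (fun ω => Z ω * indG G g ω) = {ω | G ω = g}.indicator Z := by
  ext ω
  by_cases h : G ω = g <;> simp [indG, h]

variable [MeasurableSpace Ω] {P : Measure Ω}

theorem sigmaX_le (hX : Measurable X) : sigmaX X ≤ ‹MeasurableSpace Ω› :=
  hX.comap_le

theorem MeasureTheory.Integrable.mul_indG (hG : Measurable G) (hZ : Integrable Z P) :
    Integrable (fun ω => Z ω * indG G g ω) P := by
  rw [mul_indG_eq_indicator]
  exact hZ.indicator (hG (measurableSet_singleton g))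

theorem integrable_indG [IsFiniteMeasure P] (hG : Measurable G) : Integrable (indG G g) P := by
  simpa using (integrable_const (1 : ℝ)).mul_indG (P := P) (g := g) hG

theorem mul_indG_ae_eq (h : ∀ᵐ ω ∂P, G ω = g → Z ω = Z' ω) :
    (fun ω => Z ω * indG G g ω) =ᵐ[P] fun ω => Z' ω * indG G g ω := by
  filter_upwards [h] with ω hω
  by_cases hg : G ω = g <;> simp [indG, hg, hω]

theorem ae_sub_eq_on {Y₁ Y₀ Y₁' Y₀' : Ω → ℝ} (h₁ : ∀ᵐ ω ∂P, G ω = g → Y₁ ω = Y₁' ω)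
    (h₀ : Y₀ =ᵐ[P] Y₀') : ∀ᵐ ω ∂P, G ω = g → Y₁ ω - Y₀ ω = Y₁' ω - Y₀' ω := by
  filter_upwards [h₁, h₀] with ω hω₁ hω₀ hg
  rw [hω₁ hg, hω₀]

theorem integral_sub_mul_indG_div [IsFiniteMeasure P] (hG : Measurable G) {Z₁ Z₂ Z₃ : Ω → ℝ}
    (hZ₁ : Integrable Z₁ P) (hZ₂ : Integrable Z₂ P) (hZ₃ : Integrable Z₃ P) (p : ℝ) :
    (∫ ω, (Z₁ ω - Z₃ ω) * indG G g ω ∂P) / p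
      = (∫ ω, (Z₂ ω - Z₃ ω) * indG G g ω ∂P) / p + (∫ ω, (Z₁ ω - Z₂ ω) * indG G g ω ∂P) / p := by
  have h₂₃ : Integrable (fun ω => (Z₂ ω - Z₃ ω) * indG G g ω) P := (hZ₂.sub hZ₃).mul_indG hG
  have h₁₂ : Integrable (fun ω => (Z₁ ω - Z₂ ω) * indG G g ω) P := (hZ₁.sub hZ₂).mul_indG hG
  rw [← add_div, ← integral_add h₂₃ h₁₂]
  congr 2; ext ω; ring

theorem integrable_ratio_mul_indG (hX : Measurable X) (hG : Measurable G)
    (he : Measurable (e g)) (he' : Measurable (e g')) {C : ℝ}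
    (hratio : ∀ x, |e g' x / e g x| ≤ C) (hZ : Integrable Z P) :
    Integrable (fun ω => e g' (X ω) / e g (X ω) * (Z ω * indG G g ω)) P :=
  (hZ.mul_indG hG).bdd_mul ((he'.div he).comp hX).aestronglyMeasurable
    (ae_of_all _ fun ω => hratio (X ω))

namespace IsCondVersion

theorem congr_left (hf : IsCondVersion P X G e g Z f) (h : ∀ᵐ ω ∂P, G ω = g → Z ω = Z' ω) :
    IsCondVersion P X G e g Z' f :=
  ⟨hf.1, (condExp_congr_ae (mul_indG_ae_eq h)).symm.trans hf.2⟩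

theorem congr_right (hf : IsCondVersion P X G e g Z f) (hf' : Measurable f')
    (h : ∀ᵐ ω ∂P, f (X ω) = f' (X ω)) : IsCondVersion P X G e g Z f' := by
  refine ⟨hf', hf.2.trans ?_⟩
  filter_upwards [h] with ω hω
  rw [hω]

theorem add (hf : IsCondVersion P X G e g Z f) (hf' : IsCondVersion P X G e g Z' f')
    (hG : Measurable G) (hZ : Integrable Z P) (hZ' : Integrable Z' P) :
    IsCondVersion P X G e g (fun ω => Z ω + Z' ω) (fun x => f x + f' x) := by
  refine ⟨hf.1.add hf'.1, ?_⟩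
  have hsum : (fun ω => (Z ω + Z' ω) * indG G g ω)
      = (fun ω => Z ω * indG G g ω) + fun ω => Z' ω * indG G g ω := by
    ext ω; simp only [Pi.add_apply]; ring
  rw [hsum]
  refine (condExp_add (hZ.mul_indG hG) (hZ'.mul_indG hG) _).trans ?_
  filter_upwards [hf.2, hf'.2] with ω hω hω'
  simp only [Pi.add_apply, hω, hω']
  ring

theorem neg (hf : IsCondVersion P X G e g Z f) :
    IsCondVersion P X G e g (fun ω => -Z ω) (fun x => -f x) := by
  refine ⟨hf.1.neg, ?_⟩
  have hneg : (fun ω => -Z ω * indG G g ω) = -fun ω => Z ω * indG G g ω := by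
    ext ω; simp only [Pi.neg_apply]; ring
  rw [hneg]
  refine (condExp_neg _ _).trans ?_
  filter_upwards [hf.2] with ω hω
  simp only [Pi.neg_apply, hω]
  ring

theorem comp_ae_eq (hne : ∀ x, e g x ≠ 0) (hf : IsCondVersion P X G e g Z f)
    (hf' : IsCondVersion P X G e g Z f') : ∀ᵐ ω ∂P, f (X ω) = f' (X ω) := by
  filter_upwards [hf.2.symm.trans hf'.2] with ω hω
  exact mul_right_cancel₀ (hne (X ω)) hω

theorem integrable_comp (hX : Measurable X) (he : Measurable (e g)) {ε : ℝ} (hε : 0 < ε)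
    (hpos : ∀ x, ε ≤ e g x) (hf : IsCondVersion P X G e g Z f) :
    Integrable (fun ω => f (X ω)) P := by
  have hprod : Integrable (fun ω => f (X ω) * e g (X ω)) P :=
    integrable_condExp.congr hf.2
  refine (hprod.bdd_mul (c := ε⁻¹) (f := fun ω => (e g (X ω))⁻¹)
    (he.comp hX).inv.aestronglyMeasurable (ae_of_all _ fun ω => ?_)).congr
    (ae_of_all _ fun ω => ?_)
  · rw [norm_inv, Real.norm_of_nonneg (hε.le.trans (hpos _))]
    exact inv_anti₀ hε (hpos _)
  · field_simp [(hε.trans_le (hpos (X ω))).ne']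

variable [IsFiniteMeasure P]

theorem integral_mul_indG (hX : Measurable X) (hf : IsCondVersion P X G e g Z f) :
    ∫ ω, Z ω * indG G g ω ∂P = ∫ ω, f (X ω) * e g (X ω) ∂P :=
  (integral_condExp (sigmaX_le hX)).symm.trans (integral_congr_ae hf.2)

theorem integral_ratio_mul_indG (hX : Measurable X) (hG : Measurable G)
    (he : Measurable (e g)) (he' : Measurable (e g')) (hne : ∀ x, e g x ≠ 0) {C : ℝ}
    (hratio : ∀ x, |e g' x / e g x| ≤ C) (hZ : Integrable Z P)
    (hf : IsCondVersion P X G e g Z f) (hf' : IsCondVersion P X G e g' Z' f) :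
    ∫ ω, e g' (X ω) / e g (X ω) * (Z ω * indG G g ω) ∂P = ∫ ω, Z' ω * indG G g' ω ∂P := by
  rw [integral_mul_eq_of_condExp_ae_eq (sigmaX_le hX)
    (stronglyMeasurable_sigmaX_comp (φ := fun x => e g' x / e g x) (he'.div he))
    (integrable_ratio_mul_indG hX hG he he' hratio hZ) (hZ.mul_indG hG) hf.2,
    hf'.integral_mul_indG hX]
  refine integral_congr_ae (ae_of_all _ fun ω => ?_)
  field_simp [hne (X ω)]

theorem integral_comp_mul_indG (hX : Measurable X) (hG : Measurable G)
    (hprop : P[(fun ω => indG G g ω) | sigmaX X] =ᵐ[P] fun ω => e g (X ω))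
    (hfX : Integrable (fun ω => f (X ω)) P) (hf : IsCondVersion P X G e g Z f) :
    ∫ ω, f (X ω) * indG G g ω ∂P = ∫ ω, Z ω * indG G g ω ∂P := by
  rw [integral_mul_eq_of_condExp_ae_eq (sigmaX_le hX) (stronglyMeasurable_sigmaX_comp hf.1)
    (hfX.mul_indG hG) (integrable_indG hG) hprop, hf.integral_mul_indG hX]

theorem integral_indG_div_mul_sub_comp (hX : Measurable X) (hG : Measurable G)
    (hprop : P[(fun ω => indG G g ω) | sigmaX X] =ᵐ[P] fun ω => e g (X ω))
    (he : Measurable (e g)) {ε : ℝ} (hε : 0 < ε) (hpos : ∀ x, ε ≤ e g x)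
    (hf : IsCondVersion P X G e g Z f) {D A : Ω → ℝ} (hDA : ∀ᵐ ω ∂P, G ω = g → D ω = A ω)
    (hA : Integrable A P) (hZ : Integrable Z P) (p : ℝ) :
    ∫ ω, indG G g ω / p * (D ω - f (X ω)) ∂P = (∫ ω, (A ω - Z ω) * indG G g ω ∂P) / p := by
  have hfX := hf.integrable_comp hX he hε hpos
  have hDg : Integrable (fun ω => D ω * indG G g ω) P :=
    (hA.mul_indG hG).congr (mul_indG_ae_eq hDA).symm
  calc ∫ ω, indG G g ω / p * (D ω - f (X ω)) ∂P
      = (∫ ω, D ω * indG G g ω ∂P - ∫ ω, f (X ω) * indG G g ω ∂P) / p := by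
        rw [← integral_sub hDg (hfX.mul_indG hG), ← integral_div]
        congr 1; ext ω; ring
    _ = (∫ ω, A ω * indG G g ω ∂P - ∫ ω, Z ω * indG G g ω ∂P) / p := by
        rw [integral_congr_ae (mul_indG_ae_eq hDA), hf.integral_comp_mul_indG hX hG hprop hfX]
    _ = (∫ ω, (A ω - Z ω) * indG G g ω ∂P) / p := by
        rw [← integral_sub (hA.mul_indG hG) (hZ.mul_indG hG)]
        congr 2; ext ω; ring

end IsCondVersion

theorem integral_inverse_propensity_weighted_sub [IsFiniteMeasure P] (hX : Measurable X)
    (hG : Measurable G) (he : ∀ g, Measurable (e g)) (hne : ∀ g x, e g x ≠ 0) {C : ℝ} {g₀ g₁ g₂ : GLabel}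
    (hratio : ∀ g x, |e g₀ x / e g x| ≤ C) {D Z₁ Z₂ : Ω → ℝ} {f₁ f₂ : (Fin q → ℝ) → ℝ}
    (hf₁ : IsCondVersion P X G e g₁ D f₁) (hf₁' : IsCondVersion P X G e g₀ Z₁ f₁)
    (hf₂ : IsCondVersion P X G e g₂ D f₂) (hf₂' : IsCondVersion P X G e g₀ Z₂ f₂)
    (hD : Integrable D P) (hZ₁ : Integrable Z₁ P) (hZ₂ : Integrable Z₂ P) (p : ℝ) :
    ∫ ω, e g₀ (X ω) / p * (indG G g₁ ω / e g₁ (X ω) - indG G g₂ ω / e g₂ (X ω)) * D ω ∂P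
      = (∫ ω, (Z₁ ω - Z₂ ω) * indG G g₀ ω ∂P) / p := by
  calc _ = (∫ ω, e g₀ (X ω) / e g₁ (X ω) * (D ω * indG G g₁ ω) ∂P
        - ∫ ω, e g₀ (X ω) / e g₂ (X ω) * (D ω * indG G g₂ ω) ∂P) / p := by
        rw [← integral_sub (integrable_ratio_mul_indG hX hG (he _) (he _) (hratio _) hD)
          (integrable_ratio_mul_indG hX hG (he _) (he _) (hratio _) hD), ← integral_div]
        congr 1; ext ω; ring
    _ = (∫ ω, Z₁ ω * indG G g₀ ω ∂P - ∫ ω, Z₂ ω * indG G g₀ ω ∂P) / p := by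
        rw [hf₁.integral_ratio_mul_indG hX hG (he _) (he _) (hne _) (hratio _) hD hf₁',
          hf₂.integral_ratio_mul_indG hX hG (he _) (he _) (hne _) (hratio _) hD hf₂']
    _ = _ := by
        rw [← integral_sub (hZ₁.mul_indG hG) (hZ₂.mul_indG hG)]
        congr 2; ext ω; ring

end

theorem stmt_11_general
    {Ω : Type} [MeasurableSpace Ω] (P : Measure Ω) [IsProbabilityMeasure P]
    {q : ℕ} (X : Ω → (Fin q → ℝ)) (hX : Measurable X)
    (G : Ω → GLabel) (hG : Measurable G)
    (Y0 Y1 : Ω → ℝ) (hY0 : Integrable Y0 P) (hY1 : Integrable Y1 P)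
    (e : GLabel → (Fin q → ℝ) → ℝ) (he : ∀ g, Measurable (e g))
    (he1 : ∀ g x, e g x ≤ 1)
    (hprop : ∀ g : GLabel,
      P[(fun ω => indG G g ω) | sigmaX X] =ᵐ[P] (fun ω => e g (X ω)))
    (ε : ℝ) (hε : 0 < ε) (hpos : ∀ g x, ε ≤ e g x)
    (Y110 Y111 Y101 Y100 Y000 : Ω → ℝ)
    (hI10 : Integrable Y110 P) (hI11 : Integrable Y111 P)
    (hI01 : Integrable Y101 P) (hI00 : Integrable Y100 P) (hI000 : Integrable Y000 P)
    (hconsT : ∀ᵐ ω ∂P, G ω = GLabel.T → Y1 ω = Y110 ω)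
    (hconsN : ∀ᵐ ω ∂P, G ω = GLabel.N → Y1 ω = Y101 ω)
    (hconsC : ∀ᵐ ω ∂P, G ω = GLabel.C → Y1 ω = Y100 ω)
    (hcons0 : Y0 =ᵐ[P] Y000)
    (gN gC : (Fin q → ℝ) → ℝ)
    (hgN : IsCondVersion P X G e GLabel.N (fun ω => Y100 ω - Y000 ω) gN)
    (hgC : IsCondVersion P X G e GLabel.C (fun ω => Y100 ω - Y000 ω) gC)
    (hA6 : ∀ᵐ ω ∂P, gN (X ω) = gC (X ω))
    (gT : (Fin q → ℝ) → ℝ)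
    (hgT : IsCondVersion P X G e GLabel.T (fun ω => Y100 ω - Y000 ω) gT)
    (hA4 : ∀ᵐ ω ∂P, gT (X ω) = gC (X ω))
    (fT fN : (Fin q → ℝ) → ℝ)
    (hfT : IsCondVersion P X G e GLabel.T (fun ω => Y110 ω - Y111 ω) fT)
    (hfN : IsCondVersion P X G e GLabel.N (fun ω => Y101 ω - Y100 ω) fN)
    (hA5 : ∀ᵐ ω ∂P, fT (X ω) + fN (X ω) = 0)
    (ΔμC : (Fin q → ℝ) → ℝ)
    (hΔμC : IsCondVersion P X G e GLabel.C (fun ω => Y1 ω - Y0 ω) ΔμC)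
    :
    ((∫ ω, (indG G GLabel.T ω / (P {ω | G ω = GLabel.T}).toReal) * ((Y1 ω - Y0 ω) - ΔμC (X ω)) ∂P)
        + (∫ ω, (e GLabel.T (X ω) / (P {ω | G ω = GLabel.T}).toReal) *
            (indG G GLabel.N ω / e GLabel.N (X ω) - indG G GLabel.C ω / e GLabel.C (X ω)) *
            (Y1 ω - Y0 ω) ∂P)
        = (∫ ω, (Y111 ω - Y100 ω) * indG G GLabel.T ω ∂P) / (P {ω | G ω = GLabel.T}).toReal) ∧
      ((∫ ω, (Y111 ω - Y100 ω) * indG G GLabel.T ω ∂P) / (P {ω | G ω = GLabel.T}).toReal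
        = (∫ ω, (Y110 ω - Y100 ω) * indG G GLabel.T ω ∂P) / (P {ω | G ω = GLabel.T}).toReal + (∫ ω, (Y111 ω - Y110 ω) * indG G GLabel.T ω ∂P) / (P {ω | G ω = GLabel.T}).toReal) := by
  have hne : ∀ g x, e g x ≠ 0 := fun g x => (hε.trans_le (hpos g x)).ne'
  have hratio : ∀ g x, |e GLabel.T x / e g x| ≤ ε⁻¹ := fun g x =>
    abs_div_le_inv_of_le hε (hε.le.trans (hpos _ _)) (he1 _ _) (hpos _ _)
  have hDT := ae_sub_eq_on hconsT hcons0
  have hDN := ae_sub_eq_on hconsN hcons0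
  have hDC := ae_sub_eq_on hconsC hcons0
  have hgC_T : IsCondVersion P X G e GLabel.T (fun ω => Y100 ω - Y000 ω) gC :=
    hgT.congr_right hgC.1 hA4
  have hΔμC_T : IsCondVersion P X G e GLabel.T (fun ω => Y100 ω - Y000 ω) ΔμC :=
    hgC_T.congr_right hΔμC.1 (hgC.comp_ae_eq (hne _) (hΔμC.congr_left hDC))
  have hfN_gN : ∀ᵐ ω ∂P, fN (X ω) + gN (X ω) = -fT (X ω) + gC (X ω) := by
    filter_upwards [hA5, hA6] with ω h5 h6
    linarith
  have hΔY_N : IsCondVersion P X G e GLabel.N (fun ω => Y1 ω - Y0 ω) (fun x => -fT x + gC x) :=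
    ((hfN.add hgN hG (hI01.sub hI00) (hI00.sub hI000)).congr_left
      (hDN.mono fun ω h hN => by rw [h hN]; ring)).congr_right (hfT.1.neg.add hgC.1) hfN_gN
  have hoffset_T : IsCondVersion P X G e GLabel.T
      (fun ω => -(Y110 ω - Y111 ω) + (Y100 ω - Y000 ω)) (fun x => -fT x + gC x) :=
    hfT.neg.add hgC_T hG (hI10.sub hI11).neg (hI00.sub hI000)
  have hdecomp := integral_sub_mul_indG_div (g := GLabel.T) hG hI11 hI10 hI00
    (P {ω | G ω = GLabel.T}).toReal
  refine ⟨?_, hdecomp⟩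
  rw [hΔμC_T.integral_indG_div_mul_sub_comp hX hG (hprop _) (he _) hε (hpos _) hDT
      (hI10.sub hI000) (hI00.sub hI000),
    integral_inverse_propensity_weighted_sub hX hG he hne hratio hΔY_N hoffset_T hΔμC hΔμC_T
      (hY1.sub hY0) ((hI10.sub hI11).neg.add (hI00.sub hI000)) (hI00.sub hI000), hdecomp]
  simp only [sub_sub_sub_cancel_right, add_sub_cancel_right, neg_sub]

theorem stmt_11
    {Ω : Type} [MeasurableSpace Ω] (P : Measure Ω) [IsProbabilityMeasure P]
    {q : ℕ} (X : Ω → (Fin q → ℝ)) (hX : Measurable X)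
    (G : Ω → GLabel) (hG : Measurable G)
    (Y0 Y1 : Ω → ℝ) (hY0 : Integrable Y0 P) (hY1 : Integrable Y1 P)
    (e : GLabel → (Fin q → ℝ) → ℝ) (he : ∀ g, Measurable (e g))
    (he1 : ∀ g x, e g x ≤ 1)
    (hprop : ∀ g : GLabel,
      P[(fun ω => indG G g ω) | sigmaX X] =ᵐ[P] (fun ω => e g (X ω)))
    (ε : ℝ) (hε : 0 < ε) (hpos : ∀ g x, ε ≤ e g x)
    (hpT : 0 < (P {ω | G ω = GLabel.T}).toReal)
    (Y110 Y111 Y101 Y100 Y000 : Ω → ℝ)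
    (hI10 : Integrable Y110 P) (hI11 : Integrable Y111 P)
    (hI01 : Integrable Y101 P) (hI00 : Integrable Y100 P) (hI000 : Integrable Y000 P)
    (hconsT : ∀ᵐ ω ∂P, G ω = GLabel.T → Y1 ω = Y110 ω)
    (hconsN : ∀ᵐ ω ∂P, G ω = GLabel.N → Y1 ω = Y101 ω)
    (hconsC : ∀ᵐ ω ∂P, G ω = GLabel.C → Y1 ω = Y100 ω)
    (hcons0 : Y0 =ᵐ[P] Y000)
    (gN gC : (Fin q → ℝ) → ℝ)
    (hgN : IsCondVersion P X G e GLabel.N (fun ω => Y100 ω - Y000 ω) gN)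
    (hgC : IsCondVersion P X G e GLabel.C (fun ω => Y100 ω - Y000 ω) gC)
    (hA6 : ∀ᵐ ω ∂P, gN (X ω) = gC (X ω))
    (gT : (Fin q → ℝ) → ℝ)
    (hgT : IsCondVersion P X G e GLabel.T (fun ω => Y100 ω - Y000 ω) gT)
    (hA4 : ∀ᵐ ω ∂P, gT (X ω) = gC (X ω))
    (fT fN : (Fin q → ℝ) → ℝ)
    (hfT : IsCondVersion P X G e GLabel.T (fun ω => Y110 ω - Y111 ω) fT)
    (hfN : IsCondVersion P X G e GLabel.N (fun ω => Y101 ω - Y100 ω) fN)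
    (hA5 : ∀ᵐ ω ∂P, fT (X ω) + fN (X ω) = 0)
    (ΔμC : (Fin q → ℝ) → ℝ)
    (hΔμC : IsCondVersion P X G e GLabel.C (fun ω => Y1 ω - Y0 ω) ΔμC)
    :
    ((∫ ω, (indG G GLabel.T ω / (P {ω | G ω = GLabel.T}).toReal) * ((Y1 ω - Y0 ω) - ΔμC (X ω)) ∂P)
        + (∫ ω, (e GLabel.T (X ω) / (P {ω | G ω = GLabel.T}).toReal) *
            (indG G GLabel.N ω / e GLabel.N (X ω) - indG G GLabel.C ω / e GLabel.C (X ω)) *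
            (Y1 ω - Y0 ω) ∂P)
        = (∫ ω, (Y111 ω - Y100 ω) * indG G GLabel.T ω ∂P) / (P {ω | G ω = GLabel.T}).toReal) ∧
      ((∫ ω, (Y111 ω - Y100 ω) * indG G GLabel.T ω ∂P) / (P {ω | G ω = GLabel.T}).toReal
        = (∫ ω, (Y110 ω - Y100 ω) * indG G GLabel.T ω ∂P) / (P {ω | G ω = GLabel.T}).toReal + (∫ ω, (Y111 ω - Y110 ω) * indG G GLabel.T ω ∂P) / (P {ω | G ω = GLabel.T}).toReal) :=
  stmt_11_general P X hX G hG Y0 Y1 hY0 hY1 e he he1 hprop ε hε hpos Y110 Y111 Y101 Y100 Y000 hI10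
    hI11 hI01 hI00 hI000 hconsT hconsN hconsC hcons0 gN gC hgN hgC hA6 gT hgT hA4 fT fN hfT hfN hA5
    ΔμC hΔμC
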